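/- arXiv:2603.10414 — 2 statements merged into one kernel-verified Lean document; each statement's English description precedes it below -/
import Mathlib

section
/- Every element x of W3 satisfies x ≥ a + b. -/
/-- `w a b δ n = n + a⌊n/a⌋ + b⌊n/δ⌋`. -/
def w (a b δ n : ℕ) : ℕ := n + a * (n / a) + b * (n / δ)

/-- `W0` is the image of `w`. -/
def W0 (a b δ : ℕ) : Set ℕ := Set.range (w a b δ)

/-- `W3 = {x : x + δ ∈ W0 and x ∉ W0}`. -/
def W3 (a b δ : ℕ) : Set ℕ := {x | x + δ ∈ W0 a b δ ∧ x ∉ W0 a b δ}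

/-!
If `x + δ = w n` with `x < a + b`, then `n < δ`, since otherwise `w n ≥ n + a + b`. So either `n < a`
and `w n = n` is smaller than `δ`, or `a ≤ n < 2a` and `w n = n + a`. In the latter case
`x = n + a - δ < a`, and every `x < a` is its own `w`-value, so `x ∈ W0`.
-/

section

variable {a b δ n x : ℕ}

theorem w_of_lt (hna : n < a) (hnδ : n < δ) : w a b δ n = n := by
  simp [w, Nat.div_eq_of_lt hna, Nat.div_eq_of_lt hnδ]

theorem w_of_le_of_lt_two_mul (han : a ≤ n) (hn2a : n < 2 * a) (hnδ : n < δ) :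
    w a b δ n = n + a := by
  have hdiv : n / a = 1 := Nat.div_eq_of_lt_le (by omega) (by omega)
  simp [w, hdiv, Nat.div_eq_of_lt hnδ]

theorem add_add_le_w (ha : 0 < a) (haδ : a ≤ δ) (hδn : δ ≤ n) : n + a + b ≤ w a b δ n := by
  have hna : 1 ≤ n / a := (Nat.one_le_div_iff ha).2 (haδ.trans hδn)
  have hnδ : 1 ≤ n / δ := (Nat.one_le_div_iff (ha.trans_le haδ)).2 hδn
  unfold w
  gcongr
  · exact Nat.le_mul_of_pos_right a hna
  · exact Nat.le_mul_of_pos_right b hnδ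

theorem mem_W0_of_lt (hxa : x < a) (hxδ : x < δ) : x ∈ W0 a b δ :=
  ⟨x, w_of_lt hxa hxδ⟩

end

theorem stmt_5_general (a δ : ℕ) (hlt : a < δ) (hlt2 : δ < 2 * a)
    (b : ℕ) (hb : b = a + δ) :
    ∀ x ∈ W3 a b δ, a + b ≤ x := by
  rintro x ⟨⟨n, hn⟩, hx⟩
  by_contra! hxab
  have hnδ : n < δ := by
    by_contra! hδn
    have := add_add_le_w (b := b) (by omega) hlt.le hδn
    omega
  rcases lt_or_ge n a with hna | han
  · rw [w_of_lt hna hnδ] at hn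
    omega
  · rw [w_of_le_of_lt_two_mul han (by omega) hnδ] at hn
    exact hx (mem_W0_of_lt (by omega) (by omega))

/-- Every element `x` of `W3` satisfies `x ≥ a + b`. -/
theorem stmt_5 (a δ : ℕ) (ha : 0 < a) (hlt : a < δ) (hlt2 : δ < 2 * a)
    (hgcd : Nat.gcd a δ = 1) (b : ℕ) (hb : b = a + δ) :
    ∀ x ∈ W3 a b δ, a + b ≤ x :=
  stmt_5_general a δ hlt hlt2 b hb
end

section
/- For every x ∈ W1, G(x) = 1. -/
/-- `W1 = {w n + a : n ∈ ℕ}`. -/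
def W1 (a b δ : ℕ) : Set ℕ := {x | ∃ n, x = w a b δ n + a}

/-- `mex T` is the least natural number not in `T`. -/
noncomputable def mex (T : Set ℕ) : ℕ := sInf {n | n ∉ T}

lemma mex_le_of_notMem {T : Set ℕ} {k : ℕ} (hk : k ∉ T) : mex T ≤ k :=
  Nat.sInf_le hk

lemma mex_notMem {T : Set ℕ} (hT : T.Finite) : mex T ∉ T :=
  Nat.sInf_mem hT.exists_notMem

def options (G : ℕ → ℕ) (S : Set ℕ) (x : ℕ) : Set ℕ :=
  {v | ∃ s ∈ S, s ≤ x ∧ v = G (x - s)}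

lemma options_finite (G : ℕ → ℕ) (S : Set ℕ) (x : ℕ) : (options G S x).Finite :=
  ((Set.finite_Iic x).image G).subset fun _ ⟨s, _, _, hv⟩ => ⟨x - s, by simp, hv.symm⟩

theorem grundy_eq_iff {S : Set ℕ} {G : ℕ → ℕ} (hG : ∀ x, G x = mex (options G S x))
    {k : ℕ} {P : Set ℕ} (hle : ∀ x ∈ P, k ≤ G x)
    (hindep : ∀ x ∈ P, ∀ s ∈ S, s ≤ x → x - s ∉ P)
    (hreach : ∀ x ∉ P, k ≤ G x → ∃ s ∈ S, s ≤ x ∧ x - s ∈ P) (x : ℕ) :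
    G x = k ↔ x ∈ P := by
  induction x using Nat.strong_induction_on with
  | _ x ih =>
  constructor
  · intro hx
    by_contra hxP
    obtain ⟨s, hs, hsx, hxs⟩ := hreach x hxP hx.ge
    have hs0 : s ≠ 0 := by rintro rfl; exact hxP (by simpa using hxs)
    have hk : k ∈ options G S x := ⟨s, hs, hsx, ((ih (x - s) (by omega)).2 hxs).symm⟩
    exact mex_notMem (options_finite G S x) (hG x ▸ hx ▸ hk)
  · intro hx
    refine le_antisymm ?_ (hle x hx)
    rw [hG x]
    refine mex_le_of_notMem fun ⟨s, hs, hsx, hk⟩ => hindep x hx s hs hsx ?_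
    rcases Nat.eq_zero_or_pos s with rfl | hs0
    · simpa using hx
    · exact (ih (x - s) (by omega)).1 hk.symm

lemma div_eq_or_eq_succ {d m n : ℕ} (hd : 0 < d) (hmn : m ≤ n) (hnm : n ≤ m + d) :
    n / d = m / d ∨ n / d = m / d + 1 := by
  have h₁ := Nat.div_le_div_right (c := d) hmn
  have h₂ := Nat.div_le_div_right (c := d) hnm
  rw [Nat.add_div_right m hd] at h₂
  omega

lemma mul_div_sub_div_bounds {d m n : ℕ} (hd : 0 < d) (hmn : m ≤ n) :
    d * (n / d - m / d) < n - m + d ∧ n - m < d * (n / d - m / d) + d := by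
  have := Nat.div_le_div_right (c := d) hmn
  have := Nat.div_add_mod n d
  have := Nat.div_add_mod m d
  have := Nat.mod_lt n hd
  have := Nat.mod_lt m hd
  rw [Nat.mul_sub]
  have := Nat.mul_le_mul_left d ‹m / d ≤ n / d›
  omega

lemma w_monotone (a b δ : ℕ) : Monotone (w a b δ) := fun m n h => by
  unfold w
  gcongr

section Game

variable {a δ : ℕ}

lemma w_eq_self {b n : ℕ} (hna : n < a) (hnδ : n < δ) : w a b δ n = n := by
  simp [w, Nat.div_eq_of_lt hna, Nat.div_eq_of_lt hnδ]

lemma w_add_of_div_eq {b n : ℕ} (ha : 0 < a) (h : (n + a) / δ = n / δ) :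
    w a b δ (n + a) = w a b δ n + 2 * a := by
  simp only [w, Nat.add_div_right n ha, h]
  ring

lemma w_add_of_div_eq_succ {b n : ℕ} (ha : 0 < a) (h : (n + a) / δ = n / δ + 1) :
    w a b δ (n + a) = w a b δ n + 2 * a + b := by
  simp only [w, Nat.add_div_right n ha, h]
  ring

lemma exists_w_add_eq_of_div_eq_succ {n : ℕ} (had : a ≤ δ) (hda : δ ≤ 2 * a)
    (h : (n + a) / δ = n / δ + 1) :
    ∃ m, w a (a + δ) δ n + 2 * a = w a (a + δ) δ m + (a + δ) ∨
      w a (a + δ) δ n + 2 * a = w a (a + δ) δ m + (a + (a + δ)) := by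
  have hδ : 0 < δ := Nat.pos_of_ne_zero (by rintro rfl; simp at h)
  have hcross : δ ≤ n + a := by
    by_contra! h'
    rw [Nat.div_eq_of_lt h', Nat.div_eq_of_lt (by omega)] at h
    omega
  -- `n + a - δ` lies before the multiple of `δ` that `n + a` reaches, and within `a` of `n`.
  refine ⟨n + a - δ, ?_⟩
  have hm : (n + a - δ) / δ = n / δ := by
    have := Nat.add_div_right (n + a - δ) hδ
    rw [Nat.sub_add_cancel hcross] at this
    omega
  rcases div_eq_or_eq_succ (by omega : 0 < a) (by omega : n + a - δ ≤ n) (by omega) with h' | h'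
  · left
    simp only [w, hm, h']
    omega
  · right
    simp only [w, hm, h', Nat.mul_add]
    omega

lemma w_add_ne (hlt : a < δ) (hlt2 : δ < 2 * a) {s : ℕ}
    (hs : s ∈ ({a, a + δ, a + (a + δ)} : Set ℕ)) (m n : ℕ) :
    w a (a + δ) δ m + s ≠ w a (a + δ) δ n := by
  have hs' : s = a ∨ s = a + δ ∨ s = a + (a + δ) := by simpa using hs
  intro h
  have hmn : m < n := by
    by_contra! hnm
    have := w_monotone a (a + δ) δ hnm
    omega
  have hw : w a (a + δ) δ n
      = w a (a + δ) δ m + (n - m) + a * (n / a - m / a) + (a + δ) * (n / δ - m / δ) := by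
    have := Nat.mul_le_mul_left a (Nat.div_le_div_right (c := a) hmn.le)
    have := Nat.mul_le_mul_left (a + δ) (Nat.div_le_div_right (c := δ) hmn.le)
    simp only [w, Nat.mul_sub]
    omega
  obtain ⟨hPlo, hPhi⟩ := mul_div_sub_div_bounds (by omega : 0 < a) hmn.le
  obtain ⟨hQlo, hQhi⟩ := mul_div_sub_div_bounds (by omega : 0 < δ) hmn.le
  -- `P` and `Q` count the multiples of `a` and of `δ` in `(m, n]`.
  generalize n / a - m / a = P at *
  generalize n / δ - m / δ = Q at *
  have hQ : Q ≤ 1 := by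
    by_contra! hQ
    have := Nat.mul_le_mul_left (a + δ) hQ
    omega
  have hP : P ≤ 4 := by
    by_contra! hP
    have := Nat.mul_le_mul_left a hP
    omega
  interval_cases Q <;> interval_cases P <;> omega

lemma exists_w_add_two_mul (hlt : a < δ) (hlt2 : δ < 2 * a) {n c : ℕ}
    (hc : c ∈ ({0, a, a + δ, a + (a + δ)} : Set ℕ)) :
    ∃ m, ∃ c' ∈ ({0, a, a + δ, a + (a + δ)} : Set ℕ),
      w a (a + δ) δ n + c + 2 * a = w a (a + δ) δ m + c' := by
  have ha : 0 < a := by omega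
  have hδ : 0 < δ := by omega
  rcases div_eq_or_eq_succ hδ (Nat.le_add_right n a) (by omega) with h | h
  · exact ⟨n + a, c, hc, by rw [w_add_of_div_eq ha h]; omega⟩
  have hw := w_add_of_div_eq_succ (b := a + δ) ha h
  obtain ⟨m, hm⟩ := exists_w_add_eq_of_div_eq_succ hlt.le hlt2.le h
  have hc' : c = 0 ∨ c = a ∨ c = a + δ ∨ c = a + (a + δ) := by simpa using hc
  rcases hc' with hc' | hc' | hc' | hc'
  · rcases hm with hm | hm
    · exact ⟨m, a + δ, by simp, by omega⟩
    · exact ⟨m, a + (a + δ), by simp, by omega⟩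
  · rcases hm with hm | hm
    · exact ⟨m, a + (a + δ), by simp, by omega⟩
    rcases div_eq_or_eq_succ hδ (Nat.le_add_right m a) (by omega) with h' | h'
    · exact ⟨m + a, a + δ, by simp, by rw [w_add_of_div_eq ha h']; omega⟩
    · exact ⟨m + a, 0, by simp, by rw [w_add_of_div_eq_succ ha h']; omega⟩
  · exact ⟨n + a, 0, by simp, by omega⟩
  · exact ⟨n + a, a, by simp, by omega⟩

theorem exists_eq_w_add (hlt : a < δ) (hlt2 : δ < 2 * a) (x : ℕ) :
    ∃ n, ∃ c ∈ ({0, a, a + δ, a + (a + δ)} : Set ℕ), x = w a (a + δ) δ n + c := by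
  induction x using Nat.strong_induction_on with
  | _ x ih =>
  by_cases hxa : x < a
  · exact ⟨x, 0, by simp, by rw [w_eq_self hxa (by omega)]; rfl⟩
  by_cases hx : x < 2 * a
  · exact ⟨x - a, a, by simp, by rw [w_eq_self (by omega) (by omega)]; omega⟩
  obtain ⟨n, c, hc, hn⟩ := ih (x - 2 * a) (by omega)
  obtain ⟨m, c', hc', hm⟩ := exists_w_add_two_mul hlt hlt2 (n := n) hc
  exact ⟨m, c', hc', by omega⟩

theorem grundy_eq_zero_iff {G : ℕ → ℕ} (hlt : a < δ) (hlt2 : δ < 2 * a)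
    (hG : ∀ x, G x = mex (options G {a, a + δ, a + (a + δ)} x)) (x : ℕ) :
    G x = 0 ↔ x ∈ Set.range (w a (a + δ) δ) := by
  refine grundy_eq_iff hG (fun _ _ => Nat.zero_le _) ?_ ?_ x
  · rintro _ ⟨n, rfl⟩ s hs hsn ⟨m, hm⟩
    exact w_add_ne hlt hlt2 hs m n (by omega)
  · intro x hx _
    obtain ⟨n, c, hc, rfl⟩ := exists_eq_w_add hlt hlt2 x
    rcases hc with rfl | hc
    · exact absurd ⟨n, rfl⟩ hx
    · exact ⟨c, hc, by omega, n, by omega⟩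

theorem grundy_eq_one_iff {G : ℕ → ℕ} (hlt : a < δ) (hlt2 : δ < 2 * a)
    (hG : ∀ x, G x = mex (options G {a, a + δ, a + (a + δ)} x)) (x : ℕ) :
    G x = 1 ↔ x ∈ W1 a (a + δ) δ := by
  have hzero := grundy_eq_zero_iff hlt hlt2 hG
  refine grundy_eq_iff hG ?_ ?_ ?_ x
  · rintro _ ⟨n, rfl⟩
    refine Nat.one_le_iff_ne_zero.2 fun h => ?_
    obtain ⟨m, hm⟩ := (hzero _).1 h
    exact w_add_ne hlt hlt2 (by simp) n m hm.symm
  · rintro _ ⟨n, rfl⟩ s hs hsn ⟨m, hm⟩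
    exact w_add_ne hlt hlt2 hs m n (by omega)
  · intro x hx hGx
    have hx0 : x ∉ Set.range (w a (a + δ) δ) := fun h =>
      Nat.one_le_iff_ne_zero.1 hGx ((hzero x).2 h)
    have hax : a ≤ x := by
      obtain ⟨n, c, hc, rfl⟩ := exists_eq_w_add hlt hlt2 x
      rcases hc with rfl | hc
      · exact absurd ⟨n, rfl⟩ hx0
      · simp only [Set.mem_insert_iff, Set.mem_singleton_iff] at hc
        omega
    obtain ⟨n, c, hc, hn⟩ := exists_eq_w_add hlt hlt2 (x - a)
    rcases hc with rfl | hc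
    · exact absurd ⟨n, by omega⟩ hx
    · exact ⟨c, hc, by omega, n, by omega⟩

end Game

theorem stmt_16_general (a δ : ℕ) (hlt : a < δ) (hlt2 : δ < 2 * a)
    (b : ℕ) (hb : b = a + δ)
    (G : ℕ → ℕ)
    (hG : ∀ x, G x = mex {v | ∃ s ∈ ({a, b, a + b} : Set ℕ), s ≤ x ∧ v = G (x - s)}) :
    ∀ x ∈ W1 a b δ, G x = 1 := by
  subst hb
  exact fun x hx => (grundy_eq_one_iff hlt hlt2 hG x).2 hx

/-- If `G` is the Grundy function of the subtraction game with moves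
`S = {a, b, a+b}`, then `G x = 1` for every `x ∈ W1`. -/
theorem stmt_16 (a δ : ℕ) (ha : 0 < a) (hlt : a < δ) (hlt2 : δ < 2 * a)
    (hgcd : Nat.gcd a δ = 1) (b : ℕ) (hb : b = a + δ)
    (G : ℕ → ℕ)
    (hG : ∀ x, G x = mex {v | ∃ s ∈ ({a, b, a + b} : Set ℕ), s ≤ x ∧ v = G (x - s)}) :
    ∀ x ∈ W1 a b δ, G x = 1 :=
  stmt_16_general a δ hlt hlt2 b hb G hG
end
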